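/- In a multi-player perfect-information game with probabilistic transitions, countable state space, nonempty finite action sets, and bounded continuous payoff functions, for every player i there exist a strategy σ*_i of player i and an opponent profile σ*_{-i} (a joint choice of strategies of all players other than i) such that for every state s ∈ S, every opponent profile τ_{-i}, and every strategy τ_i of player i: u_i(σ*_i, τ_{-i} | s) ≥ u_i(σ*_i, σ*_{-i} | s) ≥ u_i(τ_i, σ*_{-i} | s). In particular, for every player i and every state s the zero-sum subgame G_i(s) has a value v_i(s) = sup_{τ_i} inf_{τ_{-i}} u_i(τ_i,τ_{-i}|s) = inf_{τ_{-i}} sup_{τ_i} u_i(τ_i,τ_{-i}|s). -/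

import Mathlib

open MeasureTheory

/-- A multi-player perfect-information game with probabilistic transitions:
a set of players `N`, a state space `S` with initial state `init`, a controlling
player `ctrl s` and a nonempty finite action set `act s` for every state `s`, and
a transition probability measure `q s a` for every state `s` and action `a`.
The supports of the transition measures are mutually disjoint and every state is
reachable from the initial state, so every state is reached from `init` via
exactly one finite history (states correspond bijectively to histories). -/
structure PGame (N S A : Type*) where
  init : S
  ctrl : S → N
  act : S → Finset A
  act_nonempty : ∀ s, (act s).Nonempty
  q : S → A → PMF S
  unique_pred : ∀ z s a s' a', a ∈ act s → a' ∈ act s' →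
    z ∈ (q s a).support → z ∈ (q s' a').support → s = s' ∧ a = a'
  init_not_succ : ∀ s a, a ∈ act s → init ∉ (q s a).support
  reach : ∀ z, Relation.ReflTransGen (fun s t => ∃ a ∈ act s, t ∈ (q s a).support) init z

namespace PGame

variable {N S A : Type*} (G : PGame N S A)

/-- A play: an infinite alternating sequence of states and actions, starting at the
initial state, choosing legal actions and moving to successor states. -/
def IsPlay (p : ℕ → S × A) : Prop :=
  (p 0).1 = G.init ∧
    ∀ m, (p m).2 ∈ G.act (p m).1 ∧ (p (m + 1)).1 ∈ (G.q (p m).1 (p m).2).support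

/-- The set of plays of the game. -/
def Play : Type _ := { p : ℕ → S × A // G.IsPlay p }

/-- The set of plays carries the topology generated by the cylinder sets, i.e. the
topology induced by the product of the discrete topologies. -/
instance : TopologicalSpace G.Play :=
  letI : TopologicalSpace S := ⊥
  letI : TopologicalSpace A := ⊥
  inferInstanceAs (TopologicalSpace { p : ℕ → S × A // G.IsPlay p })

/-- The Borel σ-algebra on plays. -/
instance : MeasurableSpace G.Play := borel G.Play

/-- A strategy of player `i`: a choice of a legal action in every state controlled
by `i`. -/
def Strat (i : N) : Type _ := { f : S → A // ∀ s, G.ctrl s = i → f s ∈ G.act s }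

/-- A strategy profile. -/
def Profile : Type _ := ∀ i : N, G.Strat i

/-- The profile `σ` with player `i`'s strategy replaced by `τi`. -/
noncomputable def comb (i : N) (τi : G.Strat i) (σ : G.Profile) : G.Profile :=
  haveI := Classical.decEq N
  Function.update σ i τi

/-- The action that profile `σ` plays in state `s`. -/
def playFun (σ : G.Profile) (s : S) : A := (σ (G.ctrl s)).1 s

/-- The cylinder set of plays agreeing with the play `p0` on the first `n`
coordinates. -/
def cylSet (p0 : G.Play) (n : ℕ) : Set G.Play := { p : G.Play | ∀ m < n, p.1 m = p0.1 m }

open Classical in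
/-- `μ` is the family of Borel probability measures on plays induced by the strategy
profiles via the Ionescu–Tulcea construction applied to `q`; it is uniquely
characterized by the probabilities it assigns to the cylinder sets: actions are
chosen deterministically according to the profile and states are drawn from the
transition probabilities. -/
def IsInducedMeasure (μ : G.Profile → Measure G.Play) : Prop :=
  (∀ σ, IsProbabilityMeasure (μ σ)) ∧
    ∀ (σ : G.Profile) (p0 : G.Play) (n : ℕ),
      μ σ (G.cylSet p0 n) =
        ∏ m ∈ Finset.range n,
          ((if (p0.1 m).2 = G.playFun σ (p0.1 m).1 then 1 else 0) *
            (if m + 1 < n then G.q (p0.1 m).1 (p0.1 m).2 ((p0.1 (m + 1)).1) else 1))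

/-- Expected payoff of player `i` under the profile `σ`: the integral of `u i`
against the induced measure. -/
noncomputable def epay (μ : G.Profile → Measure G.Play) (u : N → G.Play → ℝ)
    (σ : G.Profile) (i : N) : ℝ :=
  ∫ p, u i p ∂(μ σ)

/-- Nash equilibrium: no player can improve his expected payoff by a unilateral
deviation. -/
def IsNash (μ : G.Profile → Measure G.Play) (u : N → G.Play → ℝ) (σ : G.Profile) : Prop :=
  ∀ (i : N) (τi : G.Strat i), G.epay μ u (G.comb i τi σ) i ≤ G.epay μ u σ i

/-- Secure equilibrium: a Nash equilibrium such that no player `i` has a deviation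
keeping his own expected payoff equal, making all opponents weakly worse off, and
making some opponent strictly worse off. -/
def IsSecure (μ : G.Profile → Measure G.Play) (u : N → G.Play → ℝ) (σ : G.Profile) : Prop :=
  G.IsNash μ u σ ∧
    ¬ ∃ (i : N) (τi : G.Strat i),
        G.epay μ u (G.comb i τi σ) i = G.epay μ u σ i ∧
        (∀ j : N, j ≠ i → G.epay μ u (G.comb i τi σ) j ≤ G.epay μ u σ j) ∧
        (∃ k : N, k ≠ i ∧ G.epay μ u (G.comb i τi σ) k < G.epay μ u σ k)

/-- One-step successor relation between states. -/
def step (s t : S) : Prop := ∃ a ∈ G.act s, t ∈ (G.q s a).support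

/-- The set of plays that pass through the state `s` (i.e. the plays extending the
unique history from the initial state to `s`). -/
def through (s : S) : Set G.Play := { p : G.Play | ∃ n, (p.1 n).1 = s }

/-- `E` is the family of subgame expected payoffs: `E σ s i` is the expected payoff
`u_i(σ|s)` of player `i` in the subgame `G(s)` starting from state `s`, under the
profile `σ`.  It is characterized as follows: `E σ s i` only depends on the actions
of `σ` in the subtree rooted at `s`, and for any profile `τ` agreeing with `σ`
there, the integral of `u_i` over the set of plays through `s` under the measure
induced by `τ` equals `E σ s i` times the probability of reaching `s` under `τ`. -/
def IsSubgamePayoff (μ : G.Profile → Measure G.Play) (u : N → G.Play → ℝ)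
    (E : G.Profile → S → N → ℝ) : Prop :=
  ∀ (σ τ : G.Profile) (s : S) (i : N),
    (∀ z, Relation.ReflTransGen G.step s z → G.playFun τ z = G.playFun σ z) →
    ∫ p in G.through s, u i p ∂(μ τ) = E σ s i * (μ τ (G.through s)).toReal
end PGame

/-!
Let `v(s) = sup_{τ_i} inf_{τ_{-i}} u_i(τ_i, τ_{-i} | s)` be the lower value of `G_i(s)`. Gluing
`ε`-optimal strategies of the subgames at the children of `s` shows that `v` satisfies the
Bellman equations: `v(s)` is the largest one-step expectation of `v` over the actions at `s` if
`i` controls `s`, and the smallest one otherwise. Let `σ*_i` and `σ*_{-i}` pick maximizing and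
minimizing actions. Then `v` of the current state is a submartingale under `(σ*_i, τ_{-i})` and a
supermartingale under `(τ_i, σ*_{-i})`. As `v(t)` lies between the infimum and the supremum of
`u_i` over the plays through `t`, continuity of `u_i` makes `v` of the current state converge to
`u_i` along every play, and dominated convergence gives
`u_i(τ_i, σ*_{-i} | s) ≤ v(s) ≤ u_i(σ*_i, τ_{-i} | s)`: a saddle point.
-/

section SaddlePoint

variable {ι κ : Sort*} {F : ι → κ → ℝ} {a b : ℝ}

lemma bddBelow_range_of_mem_Icc (h : ∀ i k, F i k ∈ Set.Icc a b) (i : ι) :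
    BddBelow (Set.range (F i)) :=
  ⟨a, by rintro _ ⟨k, rfl⟩; exact (h i k).1⟩

lemma bddAbove_range_ciInf_of_mem_Icc [Nonempty κ] (h : ∀ i k, F i k ∈ Set.Icc a b) :
    BddAbove (Set.range fun i => ⨅ k, F i k) :=
  ⟨b, by
    rintro _ ⟨i, rfl⟩
    exact ciInf_le_of_le (bddBelow_range_of_mem_Icc h i) (Classical.arbitrary κ) (h i _).2⟩

lemma ciSup_ciInf_mem_Icc [Nonempty ι] [Nonempty κ] (h : ∀ i k, F i k ∈ Set.Icc a b) :
    ⨆ i, ⨅ k, F i k ∈ Set.Icc a b :=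
  ⟨(le_ciInf fun k => (h (Classical.arbitrary ι) k).1).trans
      (le_ciSup (bddAbove_range_ciInf_of_mem_Icc h) _),
    ciSup_le fun i => ciInf_le_of_le (bddBelow_range_of_mem_Icc h i) (Classical.arbitrary κ)
      (h i _).2⟩

lemma ciSup_ciInf_eq_ciInf_ciSup_of_saddle (h : ∀ i k, F i k ∈ Set.Icc a b) {i₀ : ι} {k₀ : κ}
    (hi : ∀ i, F i k₀ ≤ F i₀ k₀) (hk : ∀ k, F i₀ k₀ ≤ F i₀ k) :
    ⨆ i, ⨅ k, F i k = ⨅ k, ⨆ i, F i k := by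
  have : Nonempty ι := ⟨i₀⟩
  have : Nonempty κ := ⟨k₀⟩
  have hbdd : ∀ k, BddAbove (Set.range fun i => F i k) := fun k =>
    ⟨b, by rintro _ ⟨i, rfl⟩; exact (h i k).2⟩
  refine le_antisymm (ciSup_le fun i => le_ciInf fun k => ?_) ?_
  · exact (ciInf_le (bddBelow_range_of_mem_Icc h i) k).trans (le_ciSup (hbdd k) i)
  · calc ⨅ k, ⨆ i, F i k ≤ ⨆ i, F i k₀ :=
          ciInf_le ⟨a, by rintro _ ⟨k, rfl⟩; exact (h i₀ k).1.trans (le_ciSup (hbdd k) i₀)⟩ k₀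
      _ ≤ ⨅ k, F i₀ k := (ciSup_le hi).trans (le_ciInf hk)
      _ ≤ ⨆ i, ⨅ k, F i k := le_ciSup (bddAbove_range_ciInf_of_mem_Icc h) i₀

end SaddlePoint

namespace PGame

open Filter Topology

open scoped ENNReal

variable {N S A : Type*} (G : PGame N S A)

local notation:50 s " ≼[" G "] " t:50 => Relation.ReflTransGen (PGame.step G) s t

/-! ### Histories -/

lemma exists_parent {z : S} (hz : z ≠ G.init) : ∃ s, ∃ a ∈ G.act s, z ∈ (G.q s a).support := by
  rcases (G.reach z).cases_tail with h | ⟨s, _, a, ha, hz'⟩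
  · exact absurd h hz
  · exact ⟨s, a, ha, hz'⟩

open Classical in
/-- The parent of `z` in the game tree (junk at `init`). -/
noncomputable def parent (z : S) : S :=
  if h : z = G.init then z else (G.exists_parent h).choose

open Classical in
/-- The action leading to `z` from its parent (junk at `init`). -/
noncomputable def parentAct (z : S) : A :=
  if h : z = G.init then (G.act_nonempty z).choose else (G.exists_parent h).choose_spec.choose

lemma parent_spec {z : S} (hz : z ≠ G.init) :
    G.parentAct z ∈ G.act (G.parent z) ∧ z ∈ (G.q (G.parent z) (G.parentAct z)).support := by
  rw [parent, parentAct, dif_neg hz, dif_neg hz]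
  exact (G.exists_parent hz).choose_spec.choose_spec

lemma ne_init_of_mem_support {s z : S} {a : A} (ha : a ∈ G.act s) (hz : z ∈ (G.q s a).support) :
    z ≠ G.init :=
  fun h => G.init_not_succ s a ha (h ▸ hz)

lemma parent_eq_of_mem_support {s z : S} {a : A} (ha : a ∈ G.act s)
    (hz : z ∈ (G.q s a).support) : G.parent z = s ∧ G.parentAct z = a :=
  have hs := G.parent_spec (G.ne_init_of_mem_support ha hz)
  G.unique_pred z _ _ s a hs.1 ha hs.2 hz

lemma exists_iterate_parent_eq_init (z : S) : ∃ n, G.parent^[n] z = G.init := by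
  induction G.reach z with
  | refl => exact ⟨0, rfl⟩
  | tail _ h ih =>
    obtain ⟨a, ha, hz⟩ := h
    obtain ⟨n, hn⟩ := ih
    exact ⟨n + 1, by rw [Function.iterate_succ_apply, (G.parent_eq_of_mem_support ha hz).1, hn]⟩

open Classical in
noncomputable def depth (z : S) : ℕ := Nat.find (G.exists_iterate_parent_eq_init z)

open Classical in
lemma iterate_parent_depth (z : S) : G.parent^[G.depth z] z = G.init :=
  Nat.find_spec (G.exists_iterate_parent_eq_init z)

open Classical in
lemma depth_le_of_iterate_parent {z : S} {n : ℕ} (h : G.parent^[n] z = G.init) :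
    G.depth z ≤ n :=
  Nat.find_le h

lemma depth_init : G.depth G.init = 0 :=
  Nat.eq_zero_of_le_zero (G.depth_le_of_iterate_parent (n := 0) rfl)

lemma eq_init_of_depth_eq_zero {z : S} (h : G.depth z = 0) : z = G.init := by
  simpa [h] using G.iterate_parent_depth z

lemma depth_of_mem_support {s z : S} {a : A} (ha : a ∈ G.act s) (hz : z ∈ (G.q s a).support) :
    G.depth z = G.depth s + 1 := by
  have hpar := (G.parent_eq_of_mem_support ha hz).1
  have hle : G.depth z ≤ G.depth s + 1 := G.depth_le_of_iterate_parent (by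
    rw [Function.iterate_succ_apply, hpar, G.iterate_parent_depth])
  obtain ⟨k, hk⟩ := Nat.exists_eq_succ_of_ne_zero fun h =>
    G.ne_init_of_mem_support ha hz (G.eq_init_of_depth_eq_zero h)
  have : G.depth s ≤ k := G.depth_le_of_iterate_parent (by
    rw [← hpar, ← Function.iterate_succ_apply, ← hk, G.iterate_parent_depth])
  omega

lemma depth_parent {z : S} (hz : z ≠ G.init) : G.depth (G.parent z) + 1 = G.depth z :=
  (G.depth_of_mem_support (G.parent_spec hz).1 (G.parent_spec hz).2).symm

lemma depth_le_of_reach {s z : S} (h : s ≼[G] z) : G.depth s ≤ G.depth z := by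
  induction h with
  | refl => exact le_rfl
  | tail _ h ih =>
    obtain ⟨a, ha, hz⟩ := h
    rw [G.depth_of_mem_support ha hz]
    omega

/-- The state at time `m` on the history of `z`. -/
noncomputable def ancestor (z : S) (m : ℕ) : S := G.parent^[G.depth z - m] z

lemma ancestor_depth (z : S) : G.ancestor z (G.depth z) = z := by
  simp [ancestor]

lemma ancestor_zero (z : S) : G.ancestor z 0 = G.init :=
  G.iterate_parent_depth z

lemma depth_iterate_parent {z : S} {k : ℕ} (hk : k ≤ G.depth z) :
    G.depth (G.parent^[k] z) = G.depth z - k := by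
  induction k with
  | zero => rfl
  | succ k ih =>
    have hne : G.parent^[k] z ≠ G.init := fun h => by
      have := ih (by omega)
      rw [h, G.depth_init] at this
      omega
    have := G.depth_parent hne
    rw [Function.iterate_succ_apply']
    omega

lemma depth_ancestor {z : S} {m : ℕ} (hm : m ≤ G.depth z) : G.depth (G.ancestor z m) = m := by
  rw [ancestor, G.depth_iterate_parent (Nat.sub_le _ _)]
  omega

lemma ancestor_ne_init {z : S} {m : ℕ} (h0 : 0 < m) (hm : m ≤ G.depth z) :
    G.ancestor z m ≠ G.init := fun h => by
  have := G.depth_ancestor hm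
  rw [h, G.depth_init] at this
  omega

lemma parent_ancestor {z : S} {m : ℕ} (hm : m < G.depth z) :
    G.parent (G.ancestor z (m + 1)) = G.ancestor z m := by
  rw [ancestor, ancestor, ← Function.iterate_succ_apply' G.parent]
  congr 1
  omega

lemma ancestor_ancestor {z : S} {m k : ℕ} (hmk : m ≤ k) (hk : k ≤ G.depth z) :
    G.ancestor (G.ancestor z k) m = G.ancestor z m := by
  rw [ancestor, G.depth_ancestor hk, ancestor, ancestor, ← Function.iterate_add_apply]
  congr 1
  omega

lemma ancestor_of_reach {s z : S} (h : s ≼[G] z) : G.ancestor z (G.depth s) = s := by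
  induction h with
  | refl => exact G.ancestor_depth s
  | @tail b c hb h ih =>
    obtain ⟨a, ha, hc⟩ := h
    have hd := G.depth_of_mem_support ha hc
    have hle := G.depth_le_of_reach hb
    rw [ancestor, show G.depth c - G.depth s = (G.depth b - G.depth s) + 1 by omega,
      Function.iterate_succ_apply, (G.parent_eq_of_mem_support ha hc).1]
    exact ih

lemma parent_spec_ancestor {z : S} {m : ℕ} (hm : m < G.depth z) :
    G.parentAct (G.ancestor z (m + 1)) ∈ G.act (G.ancestor z m) ∧
      G.ancestor z (m + 1) ∈
        (G.q (G.ancestor z m) (G.parentAct (G.ancestor z (m + 1)))).support := by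
  simpa only [G.parent_ancestor hm] using
    G.parent_spec (G.ancestor_ne_init (z := z) (m := m + 1) (by omega) hm)

lemma parent_spec_of_reach {s t : S} (h : s ≼[G] t) (hd : G.depth t = G.depth s + 1) :
    G.parentAct t ∈ G.act s ∧ t ∈ (G.q s (G.parentAct t)).support := by
  have h1 : G.ancestor t (G.depth s + 1) = t := hd ▸ G.ancestor_depth t
  simpa only [h1, G.ancestor_of_reach h] using G.parent_spec_ancestor (z := t) (m := G.depth s)
    (by omega)

/-! ### Plays -/

section Plays

variable {G}

def Play.state (p : G.Play) (n : ℕ) : S := (p.1 n).1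

lemma Play.state_zero (p : G.Play) : p.state 0 = G.init := p.2.1

lemma Play.act_mem (p : G.Play) (n : ℕ) : (p.1 n).2 ∈ G.act (p.state n) := (p.2.2 n).1

lemma Play.state_succ_mem (p : G.Play) (n : ℕ) :
    p.state (n + 1) ∈ (G.q (p.state n) (p.1 n).2).support :=
  (p.2.2 n).2

lemma Play.depth_state (p : G.Play) (n : ℕ) : G.depth (p.state n) = n := by
  induction n with
  | zero => rw [p.state_zero, G.depth_init]
  | succ n ih => rw [G.depth_of_mem_support (p.act_mem n) (p.state_succ_mem n), ih]

lemma Play.reach_state (p : G.Play) {m n : ℕ} (h : m ≤ n) : p.state m ≼[G] p.state n := by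
  induction n, h using Nat.le_induction with
  | base => exact .refl
  | succ n _ ih => exact ih.tail ⟨_, p.act_mem n, p.state_succ_mem n⟩

lemma Play.ancestor_state (p : G.Play) {m n : ℕ} (h : m ≤ n) :
    G.ancestor (p.state n) m = p.state m := by
  simpa [p.depth_state] using G.ancestor_of_reach (p.reach_state h)

lemma Play.eq_of_state_eq {p p' : G.Play} {n : ℕ} (h : p.state n = p'.state n) {m : ℕ}
    (hm : m < n) : p.1 m = p'.1 m := by
  have hstate : ∀ k ≤ n, p.state k = p'.state k := fun k hk => by
    rw [← p.ancestor_state hk, ← p'.ancestor_state hk, h]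
  have hact : (p.1 m).2 = (p'.1 m).2 := by
    rw [← (G.parent_eq_of_mem_support (p.act_mem m) (p.state_succ_mem m)).2,
      ← (G.parent_eq_of_mem_support (p'.act_mem m) (p'.state_succ_mem m)).2, hstate (m + 1) hm]
  exact Prod.ext (hstate m hm.le) hact

end Plays

noncomputable def fwdAct (z : S) : A := (G.act_nonempty z).choose

lemma fwdAct_mem (z : S) : G.fwdAct z ∈ G.act z := (G.act_nonempty z).choose_spec

/-- An arbitrary continuation of play after action `a` at `s`. -/
noncomputable def ray (s : S) (a : A) (k : ℕ) : S × A :=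
  (fun c : S × A =>
    ((G.q c.1 c.2).support_nonempty.choose, G.fwdAct (G.q c.1 c.2).support_nonempty.choose))^[k]
    (s, a)

lemma ray_mem {s : S} {a : A} (ha : a ∈ G.act s) (k : ℕ) :
    (G.ray s a k).2 ∈ G.act (G.ray s a k).1 ∧
      (G.ray s a (k + 1)).1 ∈ (G.q (G.ray s a k).1 (G.ray s a k).2).support := by
  simp only [ray, Function.iterate_succ_apply']
  refine ⟨?_, (G.q _ _).support_nonempty.choose_spec⟩
  cases k with
  | zero => exact ha
  | succ k => rw [Function.iterate_succ_apply']; exact G.fwdAct_mem _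

/-- The history of `s`, followed by `a` and an arbitrary continuation. -/
noncomputable def threadFun (s : S) (a : A) (m : ℕ) : S × A :=
  if m < G.depth s then (G.ancestor s m, G.parentAct (G.ancestor s (m + 1)))
  else G.ray s a (m - G.depth s)

lemma threadFun_fst {s : S} (a : A) {m : ℕ} (hm : m ≤ G.depth s) :
    (G.threadFun s a m).1 = G.ancestor s m := by
  rcases hm.lt_or_eq with hm | rfl
  · simp [threadFun, hm]
  · simp [threadFun, ray, G.ancestor_depth]

lemma isPlay_threadFun {s : S} {a : A} (ha : a ∈ G.act s) : G.IsPlay (G.threadFun s a) := by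
  refine ⟨by rw [G.threadFun_fst a (Nat.zero_le _), G.ancestor_zero], fun m => ?_⟩
  rcases lt_or_ge m (G.depth s) with hm | hm
  · rw [G.threadFun_fst a hm]
    simpa [threadFun, hm] using G.parent_spec_ancestor hm
  · have h1 : G.threadFun s a m = G.ray s a (m - G.depth s) := if_neg (by omega)
    have h2 : G.threadFun s a (m + 1) = G.ray s a (m - G.depth s + 1) := by
      rw [threadFun, if_neg (by omega)]
      congr 1
      omega
    rw [h1, h2]
    exact G.ray_mem ha _

noncomputable def thread {s : S} {a : A} (ha : a ∈ G.act s) : G.Play :=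
  ⟨G.threadFun s a, G.isPlay_threadFun ha⟩

lemma thread_of_lt {s : S} {a : A} (ha : a ∈ G.act s) {m : ℕ} (hm : m < G.depth s) :
    (G.thread ha).1 m = (G.ancestor s m, G.parentAct (G.ancestor s (m + 1))) :=
  if_pos hm

lemma thread_depth {s : S} {a : A} (ha : a ∈ G.act s) : (G.thread ha).1 (G.depth s) = (s, a) := by
  simp [thread, threadFun, ray]

lemma thread_state {s : S} {a : A} (ha : a ∈ G.act s) {m : ℕ} (hm : m ≤ G.depth s) :
    (G.thread ha).state m = G.ancestor s m :=
  G.threadFun_fst a hm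

lemma mem_through_iff {s : S} {p : G.Play} : p ∈ G.through s ↔ p.state (G.depth s) = s :=
  ⟨fun ⟨n, hn⟩ => hn ▸ congrArg p.state (p.depth_state n), fun h => ⟨_, h⟩⟩

lemma through_nonempty (s : S) : (G.through s).Nonempty :=
  ⟨G.thread (G.fwdAct_mem s), G.mem_through_iff.2 (by simp [Play.state, G.thread_depth])⟩

lemma through_init : G.through G.init = Set.univ :=
  Set.eq_univ_of_forall fun p => ⟨0, p.state_zero⟩

lemma through_subset {s t : S} (h : s ≼[G] t) : G.through t ⊆ G.through s := fun p hp => by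
  rw [mem_through_iff] at hp ⊢
  rw [← p.ancestor_state (G.depth_le_of_reach h), hp, G.ancestor_of_reach h]

lemma through_eq_iUnion_cylSet (t : S) :
    G.through t = ⋃ b : G.act t, G.cylSet (G.thread b.2) (G.depth t + 1) := by
  ext p
  simp only [Set.mem_iUnion, cylSet, Set.mem_ofPred_eq, mem_through_iff]
  constructor
  · intro hp
    have hb : (p.1 (G.depth t)).2 ∈ G.act t := by simpa only [hp] using p.act_mem (G.depth t)
    refine ⟨⟨_, hb⟩, fun m hm => ?_⟩
    rcases (Nat.lt_succ_iff.1 hm).lt_or_eq with hm | rfl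
    · have hstate : p.state (G.depth t) = (G.thread hb).state (G.depth t) := by
        rw [G.thread_state hb le_rfl, G.ancestor_depth, hp]
      exact Play.eq_of_state_eq hstate hm
    · rw [G.thread_depth]
      exact Prod.ext hp rfl
  · rintro ⟨b, hb⟩
    have := hb (G.depth t) (Nat.lt_succ_self _)
    rw [G.thread_depth] at this
    exact congrArg Prod.fst this

def slice (s : S) (n : ℕ) (t : S) : Set G.Play := G.through s ∩ {p | p.state n = t}

lemma slice_eq_through {s t : S} {n : ℕ} (hn : G.depth t = n) (h : s ≼[G] t) :
    G.slice s n t = G.through t := by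
  subst hn
  ext p
  exact ⟨fun hp => G.mem_through_iff.2 hp.2,
    fun hp => ⟨G.through_subset h hp, G.mem_through_iff.1 hp⟩⟩

lemma slice_eq_empty {s t : S} {n : ℕ} (hn : G.depth s ≤ n) (h : ¬(G.depth t = n ∧ s ≼[G] t)) :
    G.slice s n t = ∅ :=
  Set.eq_empty_iff_forall_notMem.2 fun p hp => h <| by
    obtain ⟨hs, ht⟩ := hp
    have ht : p.state n = t := ht
    subst ht
    exact ⟨p.depth_state n, G.mem_through_iff.1 hs ▸ p.reach_state hn⟩

instance : BorelSpace G.Play := ⟨rfl⟩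

lemma isOpen_setOf_coord_mem (n : ℕ) (T : Set (S × A)) : IsOpen {p : G.Play | p.1 n ∈ T} := by
  let : TopologicalSpace S := ⊥
  let : TopologicalSpace A := ⊥
  have : DiscreteTopology S := ⟨rfl⟩
  have : DiscreteTopology A := ⟨rfl⟩
  exact (isOpen_discrete T).preimage ((continuous_apply n).comp continuous_subtype_val)

lemma continuous_comp_state {X : Type*} [TopologicalSpace X] (f : S → X) (n : ℕ) :
    Continuous fun p : G.Play => f (p.state n) :=
  continuous_def.2 fun U _ => G.isOpen_setOf_coord_mem n (Prod.fst ⁻¹' (f ⁻¹' U))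

lemma measurableSet_setOf_state_eq (n : ℕ) (t : S) :
    MeasurableSet {p : G.Play | p.state n = t} :=
  (G.isOpen_setOf_coord_mem n (Prod.fst ⁻¹' {t})).measurableSet

lemma measurableSet_through (s : S) : MeasurableSet (G.through s) := by
  rw [show G.through s = {p : G.Play | p.state (G.depth s) = s} from
    Set.ext fun _ => G.mem_through_iff]
  exact G.measurableSet_setOf_state_eq _ s

lemma measurableSet_cylSet (p₀ : G.Play) (n : ℕ) : MeasurableSet (G.cylSet p₀ n) := by
  have : G.cylSet p₀ n = ⋂ m ∈ Finset.range n, {p : G.Play | p.1 m ∈ ({p₀.1 m} : Set (S × A))} := by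
    ext p
    simp [cylSet]
  exact this ▸ .biInter (Finset.range n).countable_toSet fun m _ =>
    (G.isOpen_setOf_coord_mem m _).measurableSet

lemma eventually_through_state_subset (p : G.Play) {U : Set G.Play} (hU : U ∈ 𝓝 p) :
    ∀ᶠ n in atTop, G.through (p.state n) ⊆ U := by
  let : TopologicalSpace S := ⊥
  let : TopologicalSpace A := ⊥
  obtain ⟨V, hVU, hVopen, hpV⟩ := mem_nhds_iff.1 hU
  obtain ⟨W, hWopen, rfl⟩ := isOpen_induced_iff.1 hVopen
  obtain ⟨I, O, hO, hIO⟩ := isOpen_pi_iff.1 hWopen p.1 hpV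
  refine eventually_atTop.2 ⟨I.sup id + 1, fun n hn p' hp' => hVU (hIO fun m hm => ?_)⟩
  rw [G.mem_through_iff, p.depth_state] at hp'
  have hmn : m < n := Nat.lt_of_le_of_lt (Finset.le_sup (f := id) hm) hn
  rw [Play.eq_of_state_eq hp' hmn]
  exact (hO m hm).2

lemma tendsto_comp_state_of_mem_Icc {g : G.Play → ℝ} (hg : Continuous g) {f : S → ℝ}
    (hf : ∀ t, f t ∈ Set.Icc (sInf (g '' G.through t)) (sSup (g '' G.through t))) (p : G.Play) :
    Tendsto (fun n => f (p.state n)) atTop (𝓝 (g p)) := by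
  refine Metric.tendsto_nhds.2 fun ε hε => ?_
  have hU := hg.continuousAt.preimage_mem_nhds (Metric.ball_mem_nhds (g p) (half_pos hε))
  filter_upwards [G.eventually_through_state_subset p hU] with n hn
  have hclose : ∀ x ∈ g '' G.through (p.state n), |x - g p| < ε / 2 := by
    rintro _ ⟨p', hp', rfl⟩
    exact hn hp'
  have hne := (G.through_nonempty (p.state n)).image g
  have hsup : sSup (g '' G.through (p.state n)) ≤ g p + ε / 2 :=
    csSup_le hne fun x hx => by linarith [(abs_lt.1 (hclose x hx)).2]
  have hinf : g p - ε / 2 ≤ sInf (g '' G.through (p.state n)) :=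
    le_csInf hne fun x hx => by linarith [(abs_lt.1 (hclose x hx)).1]
  rw [Real.dist_eq, abs_lt]
  constructor <;> linarith [(hf (p.state n)).1, (hf (p.state n)).2]

/-! ### Profiles -/

instance (j : N) : Nonempty (G.Strat j) := ⟨⟨G.fwdAct, fun z _ => G.fwdAct_mem z⟩⟩

instance : Nonempty G.Profile := inferInstanceAs (Nonempty (∀ j, G.Strat j))

lemma playFun_mem_act (σ : G.Profile) (s : S) : G.playFun σ s ∈ G.act s :=
  (σ (G.ctrl s)).2 s rfl

open Classical in
lemma playFun_comb (i : N) (τi : G.Strat i) (τo : G.Profile) (z : S) :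
    G.playFun (G.comb i τi τo) z = if G.ctrl z = i then τi.1 z else G.playFun τo z := by
  unfold playFun comb
  by_cases h : G.ctrl z = i
  · rw [if_pos h, h]
    simp [Function.update]
  · rw [if_neg h]
    simp [Function.update, h]

open Classical in
/-- Follows the history of `s` and agrees with `σ` elsewhere. It reaches `s` with positive
probability, which is how `IsSubgamePayoff` pins down `E σ s`. -/
noncomputable def reachTo (s : S) (σ : G.Profile) : G.Profile := fun j =>
  ⟨fun z => if G.depth z < G.depth s ∧ G.ancestor s (G.depth z) = z then
      G.parentAct (G.ancestor s (G.depth z + 1)) else (σ j).1 z, fun z hz => by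
    dsimp only
    split_ifs with h
    · obtain ⟨hact, -⟩ := G.parent_spec (G.ancestor_ne_init (z := s) (Nat.succ_pos _) h.1)
      rwa [G.parent_ancestor h.1, h.2] at hact
    · exact (σ j).2 z hz⟩

lemma playFun_reachTo_of_reach (σ : G.Profile) {s z : S} (h : s ≼[G] z) :
    G.playFun (G.reachTo s σ) z = G.playFun σ z :=
  if_neg fun h' => absurd h'.1 (not_lt.2 (G.depth_le_of_reach h))

lemma playFun_reachTo_ancestor (σ : G.Profile) {s : S} {m : ℕ} (hm : m < G.depth s) :
    G.playFun (G.reachTo s σ) (G.ancestor s m) = G.parentAct (G.ancestor s (m + 1)) := by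
  have hd := G.depth_ancestor hm.le
  unfold playFun reachTo
  dsimp only
  rw [if_pos (by rw [hd]; exact ⟨hm, rfl⟩), hd]

open Classical in
/-- The strategy that plays `a` at `s` and, below each child `t` of `s`, plays `fam t`. -/
noncomputable def graftStrat {j : N} {s : S} {a : A} (ha : a ∈ G.act s) (fam : S → G.Strat j) :
    G.Strat j :=
  ⟨fun z => if z = s then a else if s ≼[G] z then (fam (G.ancestor z (G.depth s + 1))).1 z
    else G.fwdAct z, fun z hz => by
    dsimp only
    split_ifs with h₁
    · exact h₁ ▸ ha
    · exact (fam _).2 z hz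
    · exact G.fwdAct_mem z⟩

noncomputable def graftProfile {s : S} {a : A} (ha : a ∈ G.act s) (fam : S → G.Profile) :
    G.Profile :=
  fun j => G.graftStrat ha fun t => fam t j

lemma graftStrat_self {j : N} {s : S} {a : A} (ha : a ∈ G.act s) (fam : S → G.Strat j) :
    (G.graftStrat ha fam).1 s = a :=
  if_pos rfl

lemma graftStrat_of_mem_support {j : N} {s : S} {a : A} (ha : a ∈ G.act s) (fam : S → G.Strat j)
    {b : A} {t z : S} (hb : b ∈ G.act s) (ht : t ∈ (G.q s b).support) (hz : t ≼[G] z) :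
    (G.graftStrat ha fam).1 z = (fam t).1 z := by
  have hd := G.depth_of_mem_support hb ht
  have hne : z ≠ s := fun h => by
    have := G.depth_le_of_reach hz
    rw [h] at this
    omega
  have hanc : G.ancestor z (G.depth s + 1) = t := hd ▸ G.ancestor_of_reach hz
  unfold graftStrat
  dsimp only
  rw [if_neg hne, if_pos ((Relation.ReflTransGen.single ⟨b, hb, ht⟩).trans hz), hanc]

lemma playFun_graftProfile_self {s : S} {a : A} (ha : a ∈ G.act s) (fam : S → G.Profile) :
    G.playFun (G.graftProfile ha fam) s = a :=
  G.graftStrat_self ha _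

lemma playFun_graftProfile_of_mem_support {s : S} {a : A} (ha : a ∈ G.act s)
    (fam : S → G.Profile) {b : A} {t z : S} (hb : b ∈ G.act s) (ht : t ∈ (G.q s b).support)
    (hz : t ≼[G] z) : G.playFun (G.graftProfile ha fam) z = G.playFun (fam t) z :=
  G.graftStrat_of_mem_support ha _ hb ht hz

/-! ### One-step expectations -/

lemma q_eq_zero_of_ne {s t : S} {a b : A} (ha : a ∈ G.act s) (hb : b ∈ G.act s)
    (ht : t ∈ (G.q s a).support) (hab : b ≠ a) : G.q s b t = 0 :=
  PMF.apply_eq_zero_iff _ _ |>.2 fun htb => hab (G.unique_pred t s b s a hb ha htb ht).2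

noncomputable def expectNext (s : S) (a : A) (f : S → ℝ) : ℝ :=
  ∑' t, (G.q s a t).toReal * f t

lemma summable_toReal_q_mul (s : S) (a : A) {f : S → ℝ} {C : ℝ} (hf : ∀ t, |f t| ≤ C) :
    Summable fun t => (G.q s a t).toReal * f t := by
  refine .of_norm_bounded (g := fun t => (G.q s a t).toReal * C) ?_ fun t => ?_
  · exact (ENNReal.summable_toReal (by rw [PMF.tsum_coe]; exact ENNReal.one_ne_top)).mul_right C
  · rw [Real.norm_eq_abs, abs_mul, ENNReal.abs_toReal]
    exact mul_le_mul_of_nonneg_left (hf t) ENNReal.toReal_nonneg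

lemma expectNext_const (s : S) (a : A) (c : ℝ) : G.expectNext s a (fun _ => c) = c := by
  rw [expectNext, tsum_mul_right, ← ENNReal.tsum_toReal_eq (PMF.apply_ne_top _), PMF.tsum_coe,
    ENNReal.toReal_one, one_mul]

lemma expectNext_mono (s : S) (a : A) {f g : S → ℝ} {Cf Cg : ℝ} (hf : ∀ t, |f t| ≤ Cf)
    (hg : ∀ t, |g t| ≤ Cg) (h : ∀ t ∈ (G.q s a).support, f t ≤ g t) :
    G.expectNext s a f ≤ G.expectNext s a g := by
  refine Summable.tsum_le_tsum (fun t => ?_) (G.summable_toReal_q_mul s a hf)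
    (G.summable_toReal_q_mul s a hg)
  by_cases ht : t ∈ (G.q s a).support
  · exact mul_le_mul_of_nonneg_left (h t ht) ENNReal.toReal_nonneg
  · rw [(PMF.apply_eq_zero_iff _ _).2 ht, ENNReal.toReal_zero, zero_mul, zero_mul]

lemma expectNext_add_const (s : S) (a : A) {f : S → ℝ} {C : ℝ} (hf : ∀ t, |f t| ≤ C) (c : ℝ) :
    G.expectNext s a (fun t => f t + c) = G.expectNext s a f + c := by
  simp_rw [expectNext, mul_add]
  rw [Summable.tsum_add (G.summable_toReal_q_mul s a hf)
    (G.summable_toReal_q_mul s a (f := fun _ => c) fun _ => le_rfl)]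
  exact congrArg _ (G.expectNext_const s a c)

lemma expectNext_neg (s : S) (a : A) (f : S → ℝ) :
    G.expectNext s a (fun t => -f t) = -G.expectNext s a f := by
  simp_rw [expectNext, mul_neg, tsum_neg]

lemma abs_expectNext_le (s : S) (a : A) {f : S → ℝ} {C : ℝ} (hf : ∀ t, |f t| ≤ C) :
    |G.expectNext s a f| ≤ C := by
  rw [abs_le]
  constructor
  · calc -C = G.expectNext s a (fun _ => -C) := (G.expectNext_const s a _).symm
      _ ≤ G.expectNext s a f :=
        G.expectNext_mono s a (fun _ => (abs_neg C).le) hf fun t _ => (abs_le.1 (hf t)).1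
  · calc G.expectNext s a f ≤ G.expectNext s a (fun _ => C) :=
        G.expectNext_mono s a hf (fun _ => le_rfl) fun t _ => (abs_le.1 (hf t)).2
      _ = C := G.expectNext_const s a C

noncomputable def transition (σ : G.Profile) (f : S → ℝ) (t : S) : ℝ :=
  G.expectNext t (G.playFun σ t) f

noncomputable def bestAct (f : S → ℝ) (z : S) : A :=
  (Finset.exists_max_image (G.act z) (G.expectNext z · f) (G.act_nonempty z)).choose

lemma bestAct_mem (f : S → ℝ) (z : S) : G.bestAct f z ∈ G.act z :=
  (Finset.exists_max_image (G.act z) (G.expectNext z · f) (G.act_nonempty z)).choose_spec.1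

lemma expectNext_le_bestAct (f : S → ℝ) (z : S) {a : A} (ha : a ∈ G.act z) :
    G.expectNext z a f ≤ G.expectNext z (G.bestAct f z) f :=
  (Finset.exists_max_image (G.act z) (G.expectNext z · f) (G.act_nonempty z)).choose_spec.2 a ha

noncomputable def worstAct (f : S → ℝ) (z : S) : A :=
  (Finset.exists_min_image (G.act z) (G.expectNext z · f) (G.act_nonempty z)).choose

lemma worstAct_mem (f : S → ℝ) (z : S) : G.worstAct f z ∈ G.act z :=
  (Finset.exists_min_image (G.act z) (G.expectNext z · f) (G.act_nonempty z)).choose_spec.1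

lemma worstAct_le_expectNext (f : S → ℝ) (z : S) {a : A} (ha : a ∈ G.act z) :
    G.expectNext z (G.worstAct f z) f ≤ G.expectNext z a f :=
  (Finset.exists_min_image (G.act z) (G.expectNext z · f) (G.act_nonempty z)).choose_spec.2 a ha

/-! ### The induced measures -/

open Classical in
noncomputable def reachProb (σ : G.Profile) (t : S) : ℝ≥0∞ :=
  ∏ m ∈ Finset.range (G.depth t),
    if G.parentAct (G.ancestor t (m + 1)) = G.playFun σ (G.ancestor t m) then
      G.q (G.ancestor t m) (G.parentAct (G.ancestor t (m + 1))) (G.ancestor t (m + 1))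
    else 0

lemma reachProb_of_mem_support (σ : G.Profile) {t t' : S} {a : A} (ha : a ∈ G.act t)
    (ht' : t' ∈ (G.q t a).support) :
    G.reachProb σ t' = G.reachProb σ t * G.q t (G.playFun σ t) t' := by
  classical
  have hd := G.depth_of_mem_support ha ht'
  have hanc : G.ancestor t' (G.depth t) = t := G.ancestor_of_reach (.single ⟨a, ha, ht'⟩)
  have hlow : ∀ m ≤ G.depth t, G.ancestor t' m = G.ancestor t m := fun m hm => by
    rw [← G.ancestor_ancestor hm (hd ▸ Nat.le_succ _), hanc]
  rw [reachProb, hd, Finset.prod_range_succ, reachProb]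
  congr 1
  · exact Finset.prod_congr rfl fun m hm => by
      rw [Finset.mem_range] at hm
      rw [hlow m hm.le, hlow (m + 1) hm]
  · rw [hanc, ← hd, G.ancestor_depth, (G.parent_eq_of_mem_support ha ht').2]
    split_ifs with h
    · rw [h]
    · rw [G.q_eq_zero_of_ne ha (G.playFun_mem_act σ t) ht' (Ne.symm h)]

lemma setIntegral_through_eq_tsum_slice [Countable S] (ν : Measure G.Play) {g : G.Play → ℝ}
    {s : S} (hg : IntegrableOn g (G.through s) ν) (n : ℕ) :
    ∫ p in G.through s, g p ∂ν = ∑' t, ∫ p in G.slice s n t, g p ∂ν := by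
  have hU : G.through s = ⋃ t, G.slice s n t := by
    ext p
    simp [slice]
  rw [hU] at hg ⊢
  refine integral_iUnion (fun t => (G.measurableSet_through s).inter
    (G.measurableSet_setOf_state_eq n t)) (fun t t' htt' => ?_) hg
  exact Set.disjoint_left.2 fun p hp hp' => htt' (hp.2.symm.trans hp'.2)

lemma setIntegral_through_comp_state (ν : Measure G.Play) {t : S} {n : ℕ} (hn : G.depth t = n)
    (F : S → ℝ) : ∫ p in G.through t, F (p.state n) ∂ν = F t * (ν (G.through t)).toReal := by
  rw [setIntegral_congr_fun (G.measurableSet_through t) fun p hp => by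
      rw [← hn, G.mem_through_iff.1 hp],
    setIntegral_const, smul_eq_mul, mul_comm, measureReal_def]

lemma tendsto_setIntegral_comp_state (ν : Measure G.Play) [IsFiniteMeasure ν] {f : S → ℝ} {C : ℝ}
    (hf : ∀ t, |f t| ≤ C) {g : G.Play → ℝ}
    (hfg : ∀ p, Tendsto (fun n => f (p.state n)) atTop (𝓝 (g p))) (T : Set G.Play) :
    Tendsto (fun n => ∫ p in T, f (p.state n) ∂ν) atTop (𝓝 (∫ p in T, g p ∂ν)) :=
  tendsto_integral_of_dominated_convergence (fun _ => C)
    (fun n => (G.continuous_comp_state f n).measurable.aestronglyMeasurable) (integrable_const C)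
    (fun _ => .of_forall fun _ => hf _) (.of_forall hfg)

section Measure

variable {G} {μ : G.Profile → Measure G.Play} (hμ : G.IsInducedMeasure μ)

include hμ

open Classical in
lemma measure_cylSet_thread (σ : G.Profile) {t : S} {b : A} (hb : b ∈ G.act t) :
    μ σ (G.cylSet (G.thread hb) (G.depth t + 1)) =
      G.reachProb σ t * if b = G.playFun σ t then 1 else 0 := by
  rw [hμ.2, Finset.prod_range_succ, reachProb, G.thread_depth hb, if_neg (lt_irrefl _), mul_one]
  congr 1
  refine Finset.prod_congr rfl fun m hm => ?_
  rw [Finset.mem_range] at hm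
  have hnext : ((G.thread hb).1 (m + 1)).1 = G.ancestor t (m + 1) := G.thread_state hb hm
  rw [G.thread_of_lt hb hm, hnext, if_pos (show m + 1 < G.depth t + 1 by omega), boole_mul]

lemma measure_through (σ : G.Profile) (t : S) : μ σ (G.through t) = G.reachProb σ t := by
  classical
  have hdisj : Pairwise (Function.onFun Disjoint fun b : G.act t =>
      G.cylSet (G.thread b.2) (G.depth t + 1)) :=
    fun b b' hne => Set.disjoint_left.2 fun p hp hp' => hne <| Subtype.ext <| by
      have h := (hp _ (Nat.lt_succ_self _)).symm.trans (hp' _ (Nat.lt_succ_self (G.depth t)))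
      rw [G.thread_depth, G.thread_depth] at h
      exact (Prod.ext_iff.1 h).2
  rw [G.through_eq_iUnion_cylSet, measure_iUnion hdisj fun _ => G.measurableSet_cylSet _ _,
    tsum_fintype]
  simp_rw [G.measure_cylSet_thread hμ σ, mul_ite, mul_one, mul_zero]
  rw [Finset.sum_coe_sort (G.act t) fun b => if b = G.playFun σ t then G.reachProb σ t else 0,
    Finset.sum_ite_eq' _ _ _, if_pos (G.playFun_mem_act σ t)]

lemma measure_through_of_mem_support (σ : G.Profile) {t t' : S} {a : A} (ha : a ∈ G.act t)
    (ht' : t' ∈ (G.q t a).support) :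
    μ σ (G.through t') = μ σ (G.through t) * G.q t (G.playFun σ t) t' := by
  rw [G.measure_through hμ, G.measure_through hμ, G.reachProb_of_mem_support σ ha ht']

lemma measure_reachTo_through_ne_zero (σ : G.Profile) (s : S) :
    μ (G.reachTo s σ) (G.through s) ≠ 0 := by
  have := hμ.1 (G.reachTo s σ)
  suffices ∀ m ≤ G.depth s, μ (G.reachTo s σ) (G.through (G.ancestor s m)) ≠ 0 by
    simpa [G.ancestor_depth] using this _ le_rfl
  intro m hm
  induction m with
  | zero => simp [G.ancestor_zero, G.through_init]
  | succ m ih =>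
    obtain ⟨hact, hsupp⟩ := G.parent_spec_ancestor hm
    rw [G.measure_through_of_mem_support hμ _ hact hsupp, G.playFun_reachTo_ancestor σ hm]
    exact mul_ne_zero (ih (by omega)) ((PMF.mem_support_iff _ _).1 hsupp)

lemma toReal_measure_reachTo_through_pos (σ : G.Profile) (s : S) :
    0 < (μ (G.reachTo s σ) (G.through s)).toReal := by
  have := hμ.1 (G.reachTo s σ)
  exact ENNReal.toReal_pos (G.measure_reachTo_through_ne_zero hμ σ s) (measure_ne_top _ _)

lemma integrable_of_abs_le (σ : G.Profile) {g : G.Play → ℝ} (hg : Measurable g) {C : ℝ}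
    (hC : ∀ p, |g p| ≤ C) : Integrable g (μ σ) :=
  have := hμ.1 σ
  .of_bound hg.aestronglyMeasurable C (.of_forall hC)

lemma integrable_comp_state (σ : G.Profile) {f : S → ℝ} {C : ℝ} (hf : ∀ t, |f t| ≤ C) (n : ℕ) :
    Integrable (fun p : G.Play => f (p.state n)) (μ σ) :=
  G.integrable_of_abs_le hμ σ (G.continuous_comp_state f n).measurable fun _ => hf _

variable [Countable S]

lemma setIntegral_through_eq_mul_transition (σ : G.Profile) (s : S) {g : G.Play → ℝ}
    (hg : Integrable g (μ σ)) (c : S → ℝ)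
    (hc : ∀ t, s ≼[G] t → G.depth t = G.depth s + 1 →
      ∫ p in G.through t, g p ∂(μ σ) = c t * (μ σ (G.through t)).toReal) :
    ∫ p in G.through s, g p ∂(μ σ) = (μ σ (G.through s)).toReal * G.transition σ c s := by
  rw [G.setIntegral_through_eq_tsum_slice _ hg.integrableOn (G.depth s + 1), transition,
    expectNext, ← tsum_mul_left]
  refine tsum_congr fun t => ?_
  by_cases h : G.depth t = G.depth s + 1 ∧ s ≼[G] t
  · obtain ⟨hact, hsupp⟩ := G.parent_spec_of_reach h.2 h.1
    rw [G.slice_eq_through h.1 h.2, hc t h.2 h.1,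
      G.measure_through_of_mem_support hμ σ hact hsupp, ENNReal.toReal_mul]
    ring
  · have hq : G.q s (G.playFun σ s) t = 0 := (PMF.apply_eq_zero_iff _ _).2 fun ht =>
      h ⟨G.depth_of_mem_support (G.playFun_mem_act σ s) ht,
        .single ⟨_, G.playFun_mem_act σ s, ht⟩⟩
    rw [G.slice_eq_empty (Nat.le_succ _) h, setIntegral_empty, hq, ENNReal.toReal_zero]
    ring

lemma setIntegral_through_comp_state_succ (σ : G.Profile) {s : S} {n : ℕ} (hn : G.depth s ≤ n)
    {f : S → ℝ} {C : ℝ} (hf : ∀ t, |f t| ≤ C) :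
    ∫ p in G.through s, f (p.state (n + 1)) ∂(μ σ) =
      ∫ p in G.through s, G.transition σ f (p.state n) ∂(μ σ) := by
  have hQ : ∀ t, |G.transition σ f t| ≤ C := fun t => G.abs_expectNext_le t _ hf
  rw [G.setIntegral_through_eq_tsum_slice _ (G.integrable_comp_state hμ σ hf _).integrableOn n,
    G.setIntegral_through_eq_tsum_slice _ (G.integrable_comp_state hμ σ hQ n).integrableOn n]
  refine tsum_congr fun t => ?_
  by_cases h : G.depth t = n ∧ s ≼[G] t
  · obtain ⟨rfl, hst⟩ := h
    rw [G.slice_eq_through rfl hst, G.setIntegral_through_comp_state _ rfl, mul_comm]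
    exact G.setIntegral_through_eq_mul_transition hμ σ t (G.integrable_comp_state hμ σ hf _) f
      fun t' _ ht' => G.setIntegral_through_comp_state _ ht' f
  · rw [G.slice_eq_empty hn h, setIntegral_empty, setIntegral_empty]

lemma mul_le_setIntegral_through_comp_state (σ : G.Profile) {s : S} {f : S → ℝ} {C : ℝ}
    (hf : ∀ t, |f t| ≤ C) (hb : ∀ t, s ≼[G] t → f t ≤ G.transition σ f t) (n : ℕ) :
    f s * (μ σ (G.through s)).toReal ≤
      ∫ p in G.through s, f (p.state (n + G.depth s)) ∂(μ σ) := by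
  induction n with
  | zero => rw [zero_add, G.setIntegral_through_comp_state _ rfl]
  | succ n ih =>
    have hQ : ∀ t, |G.transition σ f t| ≤ C := fun t => G.abs_expectNext_le t _ hf
    refine ih.trans ?_
    rw [add_right_comm, G.setIntegral_through_comp_state_succ hμ σ (Nat.le_add_left _ _) hf]
    refine setIntegral_mono_on (G.integrable_comp_state hμ σ hf _).integrableOn
      (G.integrable_comp_state hμ σ hQ _).integrableOn (G.measurableSet_through s)
      fun p hp => hb _ ?_
    have := p.reach_state (Nat.le_add_left (G.depth s) n)
    rwa [G.mem_through_iff.1 hp] at this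

lemma mul_le_setIntegral_through_of_le_transition (σ : G.Profile) {s : S} {f : S → ℝ} {C : ℝ}
    (hf : ∀ t, |f t| ≤ C) {g : G.Play → ℝ}
    (hfg : ∀ p, Tendsto (fun n => f (p.state n)) atTop (𝓝 (g p)))
    (hb : ∀ t, s ≼[G] t → f t ≤ G.transition σ f t) :
    f s * (μ σ (G.through s)).toReal ≤ ∫ p in G.through s, g p ∂(μ σ) :=
  have := hμ.1 σ
  ge_of_tendsto ((G.tendsto_setIntegral_comp_state _ hf hfg _).comp
      (tendsto_add_atTop_nat (G.depth s)))
    (.of_forall (G.mul_le_setIntegral_through_comp_state hμ σ hf hb))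

lemma setIntegral_through_le_mul_of_transition_le (σ : G.Profile) {s : S} {f : S → ℝ} {C : ℝ}
    (hf : ∀ t, |f t| ≤ C) {g : G.Play → ℝ}
    (hfg : ∀ p, Tendsto (fun n => f (p.state n)) atTop (𝓝 (g p)))
    (hb : ∀ t, s ≼[G] t → G.transition σ f t ≤ f t) :
    ∫ p in G.through s, g p ∂(μ σ) ≤ f s * (μ σ (G.through s)).toReal := by
  have h := G.mul_le_setIntegral_through_of_le_transition hμ σ (f := fun t => -f t)
    (fun t => (abs_neg (f t)).trans_le (hf t)) (fun p => (hfg p).neg) fun t ht => by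
      rw [transition, G.expectNext_neg]
      exact neg_le_neg (hb t ht)
  rw [integral_neg] at h
  linarith

end Measure

/-! ### Subgame payoffs -/

section SubgamePayoff

variable {G} {μ : G.Profile → Measure G.Play} {u : N → G.Play → ℝ}
  {E : G.Profile → S → N → ℝ} {i : N} {C : ℝ}
  (hμ : G.IsInducedMeasure μ) (hE : G.IsSubgamePayoff μ u E)

include hμ hE

lemma E_congr {σ σ' : G.Profile} {s : S} (i : N)
    (h : ∀ z, s ≼[G] z → G.playFun σ z = G.playFun σ' z) : E σ s i = E σ' s i := by
  have h₁ := hE σ (G.reachTo s σ) s i fun z hz => G.playFun_reachTo_of_reach σ hz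
  have h₂ := hE σ' (G.reachTo s σ) s i fun z hz =>
    (G.playFun_reachTo_of_reach σ hz).trans (h z hz)
  exact mul_right_cancel₀ (G.toReal_measure_reachTo_through_pos hμ σ s).ne' (h₁.symm.trans h₂)

lemma E_comb_graftStrat {s : S} {a : A} (ha : a ∈ G.act s) (fam : S → G.Strat i)
    (τo : G.Profile) {b : A} {t : S} (hb : b ∈ G.act s) (ht : t ∈ (G.q s b).support) :
    E (G.comb i (G.graftStrat ha fam) τo) t i = E (G.comb i (fam t) τo) t i :=
  G.E_congr hμ hE i fun z hz => by
    simp only [playFun_comb, G.graftStrat_of_mem_support ha fam hb ht hz]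

lemma E_comb_graftProfile (τi : G.Strat i) {s : S} {a : A} (ha : a ∈ G.act s)
    (fam : S → G.Profile) {b : A} {t : S} (hb : b ∈ G.act s) (ht : t ∈ (G.q s b).support) :
    E (G.comb i τi (G.graftProfile ha fam)) t i = E (G.comb i τi (fam t)) t i :=
  G.E_congr hμ hE i fun z hz => by
    simp only [playFun_comb, G.playFun_graftProfile_of_mem_support ha fam hb ht hz]

lemma E_eq_expectNext [Countable S] (hu : Measurable (u i)) (hC : ∀ p, |u i p| ≤ C)
    (σ : G.Profile) (s : S) : E σ s i = G.expectNext s (G.playFun σ s) (fun t => E σ t i) := by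
  have hagree := fun z (hz : s ≼[G] z) => G.playFun_reachTo_of_reach σ hz
  have h := G.setIntegral_through_eq_mul_transition hμ (G.reachTo s σ) s
    (G.integrable_of_abs_le hμ _ hu hC) (fun t => E σ t i)
    fun t ht _ => hE σ _ t i fun z hz => hagree z (ht.trans hz)
  rw [hE σ _ s i hagree, transition, hagree s .refl, mul_comm] at h
  exact mul_left_cancel₀ (G.toReal_measure_reachTo_through_pos hμ σ s).ne' h

lemma E_mem_Icc (hu : Measurable (u i)) (hC : ∀ p, |u i p| ≤ C) (σ : G.Profile) (t : S) :
    E σ t i ∈ Set.Icc (sInf (u i '' G.through t)) (sSup (u i '' G.through t)) := by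
  set τ := G.reachTo t σ
  have := hμ.1 τ
  have hEt := hE σ τ t i fun z hz => G.playFun_reachTo_of_reach σ hz
  have hpos := G.toReal_measure_reachTo_through_pos hμ σ t
  have hint := (G.integrable_of_abs_le hμ τ hu hC).integrableOn (s := G.through t)
  have hbdd : BddBelow (u i '' G.through t) ∧ BddAbove (u i '' G.through t) :=
    ⟨⟨-C, by rintro _ ⟨p, _, rfl⟩; exact (abs_le.1 (hC p)).1⟩,
      ⟨C, by rintro _ ⟨p, _, rfl⟩; exact (abs_le.1 (hC p)).2⟩⟩
  constructor
  · have h := setIntegral_ge_of_const_le_real (G.measurableSet_through t) (measure_ne_top _ _)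
      (fun p hp => csInf_le hbdd.1 ⟨p, hp, rfl⟩) hint
    rw [hEt, measureReal_def] at h
    exact le_of_mul_le_mul_right h hpos
  · have h := setIntegral_mono_on hint (integrableOn_const (measure_ne_top _ _))
      (G.measurableSet_through t) (fun p hp => le_csSup hbdd.2 ⟨p, hp, rfl⟩)
    rw [hEt, setIntegral_const, smul_eq_mul, measureReal_def, mul_comm] at h
    exact le_of_mul_le_mul_left h hpos

lemma le_E_of_le_transition [Countable S] {σ : G.Profile} {s : S} {f : S → ℝ}
    (hf : ∀ t, |f t| ≤ C) (hfu : ∀ p, Tendsto (fun n => f (p.state n)) atTop (𝓝 (u i p)))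
    (hb : ∀ t, s ≼[G] t → f t ≤ G.transition σ f t) : f s ≤ E σ s i := by
  have hagree := fun z (hz : s ≼[G] z) => G.playFun_reachTo_of_reach σ hz
  have h := G.mul_le_setIntegral_through_of_le_transition hμ (G.reachTo s σ) hf hfu
    fun t ht => by simpa only [transition, hagree t ht] using hb t ht
  rw [hE σ _ s i hagree] at h
  exact le_of_mul_le_mul_right h (G.toReal_measure_reachTo_through_pos hμ σ s)

lemma E_le_of_transition_le [Countable S] {σ : G.Profile} {s : S} {f : S → ℝ}
    (hf : ∀ t, |f t| ≤ C) (hfu : ∀ p, Tendsto (fun n => f (p.state n)) atTop (𝓝 (u i p)))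
    (hb : ∀ t, s ≼[G] t → G.transition σ f t ≤ f t) : E σ s i ≤ f s := by
  have hagree := fun z (hz : s ≼[G] z) => G.playFun_reachTo_of_reach σ hz
  have h := G.setIntegral_through_le_mul_of_transition_le hμ (G.reachTo s σ) hf hfu
    fun t ht => by simpa only [transition, hagree t ht] using hb t ht
  rw [hE σ _ s i hagree] at h
  exact le_of_mul_le_mul_right h (G.toReal_measure_reachTo_through_pos hμ σ s)

end SubgamePayoff

/-! ### The lower value -/

/-- The lower value of the zero-sum game `G_i(s)`. -/
noncomputable def lowerValue (E : G.Profile → S → N → ℝ) (i : N) (s : S) : ℝ :=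
  ⨆ τi : G.Strat i, ⨅ τo : G.Profile, E (G.comb i τi τo) s i

section LowerValue

variable {G} {μ : G.Profile → Measure G.Play} {u : N → G.Play → ℝ}
  {E : G.Profile → S → N → ℝ} {i : N} {C : ℝ} (hμ : G.IsInducedMeasure μ)
  (hE : G.IsSubgamePayoff μ u E) (hu : Measurable (u i)) (hC : ∀ p, |u i p| ≤ C)

include hμ hE hu hC

lemma abs_E_le (σ : G.Profile) (t : S) : |E σ t i| ≤ C := by
  obtain ⟨h₁, h₂⟩ := G.E_mem_Icc hμ hE hu hC σ t
  refine abs_le.2 ⟨(le_csInf ((G.through_nonempty t).image _) (by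
      rintro _ ⟨p, _, rfl⟩; exact (abs_le.1 (hC p)).1)).trans h₁,
    h₂.trans (csSup_le ((G.through_nonempty t).image _) (by
      rintro _ ⟨p, _, rfl⟩; exact (abs_le.1 (hC p)).2))⟩

lemma lowerValue_mem_Icc (t : S) :
    G.lowerValue E i t ∈ Set.Icc (sInf (u i '' G.through t)) (sSup (u i '' G.through t)) :=
  ciSup_ciInf_mem_Icc fun _ _ => G.E_mem_Icc hμ hE hu hC _ t

lemma abs_lowerValue_le (t : S) : |G.lowerValue E i t| ≤ C :=
  abs_le.2 (ciSup_ciInf_mem_Icc fun _ _ => abs_le.1 (G.abs_E_le hμ hE hu hC _ t))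

lemma iInf_le_E_comb (τi : G.Strat i) (τo : G.Profile) (s : S) :
    ⨅ τo' : G.Profile, E (G.comb i τi τo') s i ≤ E (G.comb i τi τo) s i :=
  ciInf_le (bddBelow_range_of_mem_Icc (F := fun τi τo => E (G.comb i τi τo) s i)
    (fun _ _ => abs_le.1 (G.abs_E_le hμ hE hu hC _ s)) τi) τo

lemma iInf_le_lowerValue (τi : G.Strat i) (s : S) :
    ⨅ τo : G.Profile, E (G.comb i τi τo) s i ≤ G.lowerValue E i s :=
  le_ciSup (bddAbove_range_ciInf_of_mem_Icc (F := fun τi τo => E (G.comb i τi τo) s i)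
    fun _ _ => abs_le.1 (G.abs_E_le hμ hE hu hC _ s)) τi

/-- Glue `ε`-optimal strategies of player `i` in the subgames at the children of `s`. -/
lemma exists_strat_forall_expectNext_le [Countable S] (s : S) {a : A} (ha : a ∈ G.act s) {ε : ℝ}
    (hε : 0 < ε) :
    ∃ τi : G.Strat i, τi.1 s = a ∧ ∀ τo : G.Profile,
      G.expectNext s (G.playFun (G.comb i τi τo) s) (G.lowerValue E i) ≤
        E (G.comb i τi τo) s i + ε := by
  choose fam hfam using fun t => exists_lt_of_lt_ciSup (sub_lt_self (G.lowerValue E i t) hε)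
  refine ⟨G.graftStrat ha fam, G.graftStrat_self ha fam, fun τo => ?_⟩
  have hE_abs := G.abs_E_le hμ hE hu hC
  rw [G.E_eq_expectNext hμ hE hu hC _ s, ← G.expectNext_add_const _ _ (hE_abs _)]
  refine G.expectNext_mono _ _ (G.abs_lowerValue_le hμ hE hu hC)
    (fun t => (abs_add_le _ _).trans (add_le_add (hE_abs _ t) le_rfl)) fun t ht => ?_
  rw [G.E_comb_graftStrat hμ hE ha fam τo (G.playFun_mem_act _ s) ht]
  linarith [hfam t, G.iInf_le_E_comb hμ hE hu hC (fam t) τo t]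

/-- Glue `ε`-optimal opponent profiles in the subgames at the children of `s`. -/
lemma exists_profile_forall_le_expectNext [Countable S] (τi : G.Strat i) (s : S) {a : A}
    (ha : a ∈ G.act s) {ε : ℝ} (hε : 0 < ε) :
    ∃ τo : G.Profile, G.playFun τo s = a ∧ E (G.comb i τi τo) s i ≤
      G.expectNext s (G.playFun (G.comb i τi τo) s) (G.lowerValue E i) + ε := by
  choose fam hfam using fun t => exists_lt_of_ciInf_lt
    (lt_add_of_pos_right (⨅ τo : G.Profile, E (G.comb i τi τo) t i) hε)
  refine ⟨G.graftProfile ha fam, G.playFun_graftProfile_self ha fam, ?_⟩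
  have hv_abs := G.abs_lowerValue_le hμ hE hu hC
  rw [G.E_eq_expectNext hμ hE hu hC _ s, ← G.expectNext_add_const _ _ hv_abs]
  refine G.expectNext_mono _ _ (G.abs_E_le hμ hE hu hC _)
    (fun t => (abs_add_le _ _).trans (add_le_add (hv_abs t) le_rfl)) fun t ht => ?_
  rw [G.E_comb_graftProfile hμ hE τi ha fam (G.playFun_mem_act _ s) ht]
  linarith [hfam t, G.iInf_le_lowerValue hμ hE hu hC τi t]

lemma expectNext_le_lowerValue [Countable S] {s : S} (hs : G.ctrl s = i) {a : A}
    (ha : a ∈ G.act s) : G.expectNext s a (G.lowerValue E i) ≤ G.lowerValue E i s := by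
  refine le_of_forall_pos_le_add fun ε hε => ?_
  obtain ⟨τi, hτi, h⟩ := G.exists_strat_forall_expectNext_le hμ hE hu hC s ha hε
  suffices G.expectNext s a (G.lowerValue E i) - ε ≤ G.lowerValue E i s by linarith
  refine (le_ciInf fun τo => ?_).trans (G.iInf_le_lowerValue hμ hE hu hC τi s)
  have := h τo
  rw [playFun_comb, if_pos hs, hτi] at this
  linarith

lemma expectNext_worstAct_le_lowerValue [Countable S] {s : S} :
    G.expectNext s (G.worstAct (G.lowerValue E i) s) (G.lowerValue E i) ≤ G.lowerValue E i s := by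
  refine le_of_forall_pos_le_add fun ε hε => ?_
  obtain ⟨τi, -, h⟩ := G.exists_strat_forall_expectNext_le hμ hE hu hC s (G.fwdAct_mem s) hε
  suffices G.expectNext s (G.worstAct (G.lowerValue E i) s) (G.lowerValue E i) - ε ≤
      G.lowerValue E i s by linarith
  refine (le_ciInf fun τo => ?_).trans (G.iInf_le_lowerValue hμ hE hu hC τi s)
  linarith [(G.worstAct_le_expectNext _ s (G.playFun_mem_act (G.comb i τi τo) s)).trans (h τo)]

lemma lowerValue_le_expectNext_bestAct [Countable S] {s : S} (hs : G.ctrl s = i) :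
    G.lowerValue E i s ≤ G.expectNext s (G.bestAct (G.lowerValue E i) s) (G.lowerValue E i) := by
  refine le_of_forall_pos_le_add fun ε hε => ciSup_le fun τi => ?_
  obtain ⟨τo, -, h⟩ := G.exists_profile_forall_le_expectNext hμ hE hu hC τi s (G.fwdAct_mem s) hε
  refine (G.iInf_le_E_comb hμ hE hu hC τi τo s).trans (h.trans ?_)
  rw [playFun_comb, if_pos hs]
  gcongr
  exact G.expectNext_le_bestAct _ s (τi.2 s hs)

lemma lowerValue_le_expectNext [Countable S] {s : S} (hs : G.ctrl s ≠ i) {a : A}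
    (ha : a ∈ G.act s) : G.lowerValue E i s ≤ G.expectNext s a (G.lowerValue E i) := by
  refine le_of_forall_pos_le_add fun ε hε => ciSup_le fun τi => ?_
  obtain ⟨τo, hτo, h⟩ := G.exists_profile_forall_le_expectNext hμ hE hu hC τi s ha hε
  rw [playFun_comb, if_neg hs, hτo] at h
  exact (G.iInf_le_E_comb hμ hE hu hC τi τo s).trans h

end LowerValue

/-! ### Optimal strategies -/

noncomputable def optStrat (E : G.Profile → S → N → ℝ) (i : N) : G.Strat i :=
  ⟨G.bestAct (G.lowerValue E i), fun z _ => G.bestAct_mem _ z⟩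

noncomputable def optProfile (E : G.Profile → S → N → ℝ) (i : N) : G.Profile := fun _ =>
  ⟨G.worstAct (G.lowerValue E i), fun z _ => G.worstAct_mem _ z⟩

section Optimal

variable {G} [Countable S] {μ : G.Profile → Measure G.Play} {u : N → G.Play → ℝ}
  {E : G.Profile → S → N → ℝ} {i : N} {C : ℝ}
  (hμ : G.IsInducedMeasure μ) (hE : G.IsSubgamePayoff μ u E)
  (hu : Continuous (u i)) (hC : ∀ p, |u i p| ≤ C)

include hμ hE hu hC

lemma lowerValue_le_E_optStrat (τo : G.Profile) (s : S) :
    G.lowerValue E i s ≤ E (G.comb i (G.optStrat E i) τo) s i := by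
  refine G.le_E_of_le_transition hμ hE (G.abs_lowerValue_le hμ hE hu.measurable hC)
    (G.tendsto_comp_state_of_mem_Icc hu (G.lowerValue_mem_Icc hμ hE hu.measurable hC))
    fun t _ => ?_
  rw [transition, playFun_comb]
  split_ifs with ht
  · exact G.lowerValue_le_expectNext_bestAct hμ hE hu.measurable hC ht
  · exact G.lowerValue_le_expectNext hμ hE hu.measurable hC ht (G.playFun_mem_act τo t)

lemma E_optProfile_le_lowerValue (τi : G.Strat i) (s : S) :
    E (G.comb i τi (G.optProfile E i)) s i ≤ G.lowerValue E i s := by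
  refine G.E_le_of_transition_le hμ hE (G.abs_lowerValue_le hμ hE hu.measurable hC)
    (G.tendsto_comp_state_of_mem_Icc hu (G.lowerValue_mem_Icc hμ hE hu.measurable hC))
    fun t _ => ?_
  rw [transition, playFun_comb]
  split_ifs with ht
  · exact G.expectNext_le_lowerValue hμ hE hu.measurable hC ht (τi.2 t ht)
  · exact G.expectNext_worstAct_le_lowerValue hμ hE hu.measurable hC

end Optimal

end PGame

theorem exists_subgame_optimal_strategies_general
    {N S A : Type*} [Countable S]
    (G : PGame N S A) (u : N → G.Play → ℝ)
    (hu_bdd : ∀ i : N, ∃ C : ℝ, ∀ p : G.Play, |u i p| ≤ C)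
    (hu_cont : ∀ i : N, Continuous (u i))
    (μ : G.Profile → MeasureTheory.Measure G.Play)
    (hμ : G.IsInducedMeasure μ)
    (E : G.Profile → S → N → ℝ)
    (hE : G.IsSubgamePayoff μ u E) :
    ∀ i : N, ∃ (σi : G.Strat i) (σo : G.Profile),
      (∀ (s : S) (τo : G.Profile) (τi : G.Strat i),
          E (G.comb i σi σo) s i ≤ E (G.comb i σi τo) s i ∧
          E (G.comb i τi σo) s i ≤ E (G.comb i σi σo) s i) ∧
      (∀ s : S,
          (⨆ τi : G.Strat i, ⨅ τo : G.Profile, E (G.comb i τi τo) s i) =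
            (⨅ τo : G.Profile, ⨆ τi : G.Strat i, E (G.comb i τi τo) s i)) := by
  intro i
  obtain ⟨C, hC⟩ := hu_bdd i
  have hlow := G.lowerValue_le_E_optStrat hμ hE (hu_cont i) hC
  have hup := G.E_optProfile_le_lowerValue hμ hE (hu_cont i) hC
  refine ⟨G.optStrat E i, G.optProfile E i,
    fun s τo τi => ⟨(hup _ s).trans (hlow τo s), (hup τi s).trans (hlow _ s)⟩, fun s => ?_⟩
  exact ciSup_ciInf_eq_ciInf_ciSup_of_saddle
    (fun _ _ => abs_le.1 (G.abs_E_le hμ hE (hu_cont i).measurable hC _ s))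
    (fun τi => (hup τi s).trans (hlow _ s)) (fun τo => (hup _ s).trans (hlow τo s))

/-- **Existence of subgame values and subgame-perfect optimal strategies**
(Lemma 2): in a multi-player perfect-information game with probabilistic
transitions, countable state space, nonempty finite action sets, and bounded
continuous payoff functions, every player `i` has a strategy `σ*_i` and his
opponents have a joint strategy profile `σ*_{-i}` such that for every state `s`,
every opponent profile `τ_{-i}` and every strategy `τ_i` of player `i`:
`u_i(σ*_i, τ_{-i} | s) ≥ u_i(σ*_i, σ*_{-i} | s) ≥ u_i(τ_i, σ*_{-i} | s)`.
In particular, every zero-sum subgame `G_i(s)` has a value: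
`sup_{τ_i} inf_{τ_{-i}} u_i(τ_i,τ_{-i}|s) = inf_{τ_{-i}} sup_{τ_i} u_i(τ_i,τ_{-i}|s)`. -/
theorem exists_subgame_optimal_strategies
    {N S A : Type*} [Finite N] [Countable S]
    (hN : 2 ≤ Nat.card N)
    (G : PGame N S A) (u : N → G.Play → ℝ)
    (hu_bdd : ∀ i : N, ∃ C : ℝ, ∀ p : G.Play, |u i p| ≤ C)
    (hu_cont : ∀ i : N, Continuous (u i))
    (μ : G.Profile → MeasureTheory.Measure G.Play)
    (hμ : G.IsInducedMeasure μ)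
    (E : G.Profile → S → N → ℝ)
    (hE : G.IsSubgamePayoff μ u E) :
    ∀ i : N, ∃ (σi : G.Strat i) (σo : G.Profile),
      (∀ (s : S) (τo : G.Profile) (τi : G.Strat i),
          E (G.comb i σi σo) s i ≤ E (G.comb i σi τo) s i ∧
          E (G.comb i τi σo) s i ≤ E (G.comb i σi σo) s i) ∧
      (∀ s : S,
          (⨆ τi : G.Strat i, ⨅ τo : G.Profile, E (G.comb i τi τo) s i) =
            (⨅ τo : G.Profile, ⨆ τi : G.Strat i, E (G.comb i τi τo) s i)) :=
  exists_subgame_optimal_strategies_general G u hu_bdd hu_cont μ hμ E hE
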